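/- Let g : ℝⁿ → ℝ be a convex polynomial of degree at most M with g(0) = 0 and ∇g(0) = 0, written g(v) = Σ_α c_α v^α. Suppose there exists A > 0 such that the ball {|v| ≤ A} is contained in the sublevel set {g ≤ 1}. Then there exists a constant C depending only on A, M, and n such that Σ_α |c_α| ≤ C. -/

import Mathlib

/-!
Since `g(0) = 0`, convexity gives `0 ≤ g(v) + g(-v)`, so `g ≥ -1` on the ball as well and
`|g| ≤ 1` there. The polynomials whose exponents lie in a fixed finite set (those bounded by `M`
coordinatewise) form a finite-dimensional space, and restriction to the ball is injective on it (a polynomial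
vanishing on an open set vanishes by the identity theorem). An injective linear map out of a
finite-dimensional space is antilipschitz, so the coefficients are bounded by a multiple of the
sup norm on the ball.
-/

open Filter Topology Finset MvPolynomial

theorem ConvexOn.two_mul_apply_zero_le {E : Type*} [AddCommGroup E] [Module ℝ E] {f : E → ℝ}
    (hf : ConvexOn ℝ Set.univ f) (x : E) : 2 * f 0 ≤ f x + f (-x) := by
  have h := hf.2 (Set.mem_univ x) (Set.mem_univ (-x)) (by norm_num : (0 : ℝ) ≤ 1 / 2)
    (by norm_num : (0 : ℝ) ≤ 1 / 2) (by norm_num)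
  rw [smul_neg, add_neg_cancel, smul_eq_mul, smul_eq_mul] at h
  linarith

namespace MvPolynomial

theorem eq_zero_of_eventually_eval_eq_zero {σ : Type*} [Fintype σ] {p : MvPolynomial σ ℝ}
    {x : σ → ℝ} (h : ∀ᶠ y in 𝓝 x, eval y p = 0) : p = 0 := by
  have hp : (eval · p) = 0 :=
    (AnalyticOnNhd.eval_mvPolynomial p).eq_of_eventuallyEq analyticOnNhd_const h
  exact funext fun y => by simpa using congrFun hp y

theorem support_subset_Iic_of_totalDegree_le {σ R : Type*} [Fintype σ] [DecidableEq σ]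
    [CommSemiring R] {p : MvPolynomial σ R} {M : ℕ} (hp : p.totalDegree ≤ M) :
    p.support ⊆ Iic (Finsupp.equivFunOnFinite.symm fun _ => M) := fun _ hα =>
  mem_Iic.mpr fun i => (monomial_le_degreeOf i hα).trans ((p.degreeOf_le_totalDegree i).trans hp)

section ContinuousMapOn

variable {ι : Type*}

noncomputable def toContinuousMapOnAlgHom (K : Set (EuclideanSpace ℝ ι)) :
    MvPolynomial ι ℝ →ₐ[ℝ] C(K, ℝ) :=
  aeval fun i => ⟨fun v => (v : EuclideanSpace ℝ ι) i, by fun_prop⟩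

@[simp]
theorem toContinuousMapOnAlgHom_apply (K : Set (EuclideanSpace ℝ ι)) (p : MvPolynomial ι ℝ)
    (v : K) : toContinuousMapOnAlgHom K p v = eval (fun i => (v : EuclideanSpace ℝ ι) i) p := by
  induction p using MvPolynomial.induction_on <;> simp_all [toContinuousMapOnAlgHom]

theorem toContinuousMapOnAlgHom_injective [Fintype ι] {K : Set (EuclideanSpace ℝ ι)}
    (hK : (interior K).Nonempty) : Function.Injective (toContinuousMapOnAlgHom K) := by
  obtain ⟨x, hx⟩ := hK
  refine (injective_iff_map_eq_zero _).mpr fun p hp =>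
    eq_zero_of_eventually_eval_eq_zero (x := WithLp.ofLp x) ?_
  have hK : ∀ᶠ y in 𝓝 (WithLp.ofLp x), WithLp.toLp 2 y ∈ K :=
    (PiLp.continuous_toLp 2 _).continuousAt.preimage_mem_nhds (mem_interior_iff_mem_nhds.mp hx)
  filter_upwards [hK] with y hy
  simpa using DFunLike.congr_fun hp ⟨WithLp.toLp 2 y, hy⟩

end ContinuousMapOn

section OfCoeffs

variable {σ R : Type*} [CommSemiring R]

noncomputable def ofCoeffs (T : Finset (σ →₀ ℕ)) : (T → R) →ₗ[R] MvPolynomial σ R where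
  toFun c := ∑ a, monomial a.1 (c a)
  map_add' c d := by simp [sum_add_distrib]
  map_smul' r c := by simp [smul_sum, smul_monomial]

theorem coeff_ofCoeffs (T : Finset (σ →₀ ℕ)) (c : T → R) (a : T) :
    coeff a (ofCoeffs T c) = c a := by
  classical
  simp [ofCoeffs, coeff_sum, coeff_monomial]

theorem ofCoeffs_injective (T : Finset (σ →₀ ℕ)) : Function.Injective (ofCoeffs (R := R) T) :=
  fun c d h => _root_.funext fun a => by rw [← coeff_ofCoeffs T c, h, coeff_ofCoeffs]

theorem ofCoeffs_coeff {T : Finset (σ →₀ ℕ)} {p : MvPolynomial σ R}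
    (hp : p.support ⊆ T) :
    ofCoeffs T (fun a => coeff a p) = p := by
  conv_rhs => rw [p.as_sum, sum_subset hp fun a _ ha => by simp [notMem_support_iff.mp ha]]
  exact sum_coe_sort T fun a => monomial a (coeff a p)

end OfCoeffs

theorem exists_sum_abs_coeff_le_of_abs_eval_le {ι : Type*} [Fintype ι]
    {K : Set (EuclideanSpace ℝ ι)} [CompactSpace K] (hK : (interior K).Nonempty)
    (T : Finset (ι →₀ ℕ)) :
    ∃ C, ∀ (p : MvPolynomial ι ℝ) (B : ℝ), p.support ⊆ T →
      (∀ v ∈ K, |eval (fun i => v i) p| ≤ B) → ∑ α ∈ p.support, |coeff α p| ≤ C * B := by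
  obtain ⟨L, -, hL⟩ :=
    ((toContinuousMapOnAlgHom K).toLinearMap ∘ₗ ofCoeffs T).exists_antilipschitzWith <|
      LinearMap.ker_eq_bot.mpr <|
        (toContinuousMapOnAlgHom_injective hK).comp (ofCoeffs_injective T)
  refine ⟨#T * L, fun p B hT hB => ?_⟩
  have : Nonempty K := hK.mono interior_subset |>.to_subtype
  set c : T → ℝ := fun a => coeff a p
  have hp : ‖toContinuousMapOnAlgHom K p‖ ≤ B := by
    simpa [ContinuousMap.norm_le_of_nonempty] using fun v hv => hB v hv
  have hc : ‖c‖ ≤ L * B := by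
    refine (ZeroHomClass.bound_of_antilipschitz _ hL c).trans ?_
    simpa [c, ofCoeffs_coeff hT] using mul_le_mul_of_nonneg_left hp L.2
  calc ∑ α ∈ p.support, |coeff α p| ≤ ∑ α ∈ T, |coeff α p| :=
        sum_le_sum_of_subset_of_nonneg hT fun _ _ _ => abs_nonneg _
    _ = ∑ a : T, ‖c a‖ := (sum_coe_sort T _).symm
    _ ≤ ∑ _a : T, ‖c‖ := sum_le_sum fun a _ => norm_le_pi_norm c a
    _ ≤ #T * (L * B) := by
        rw [sum_const, card_univ, Fintype.card_coe, nsmul_eq_mul]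
        gcongr
    _ = #T * L * B := by ring

end MvPolynomial

theorem stmt5 (n M : ℕ) (A : ℝ) (hA : 0 < A) :
    ∃ C : ℝ, 0 < C ∧
      ∀ g : MvPolynomial (Fin n) ℝ,
        g.totalDegree ≤ M →
        (∀ α ∈ g.support, 2 ≤ ∑ i, α i) →
        ConvexOn ℝ Set.univ (fun v : Fin n → ℝ => MvPolynomial.eval v g) →
        {v : EuclideanSpace ℝ (Fin n) | ‖v‖ ≤ A}
          ⊆ {v : EuclideanSpace ℝ (Fin n) | MvPolynomial.eval (fun i => v i) g ≤ 1} →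
        ∑ α ∈ g.support, |MvPolynomial.coeff α g| ≤ C := by
  obtain ⟨C, hC⟩ := exists_sum_abs_coeff_le_of_abs_eval_le
    (K := Metric.closedBall (0 : EuclideanSpace ℝ (Fin n)) A)
    (by rw [interior_closedBall _ hA.ne']; exact ⟨0, Metric.mem_ball_self hA⟩)
    (Iic (Finsupp.equivFunOnFinite.symm fun _ => M))
  refine ⟨max C 1, by positivity, fun g hdeg hmon hconv hball => ?_⟩
  have hg0 : eval 0 g = 0 := by
    rw [eval_zero, constantCoeff_eq, ← notMem_support_iff]
    exact fun h => by simpa using hmon 0 h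
  have hbound : ∀ v ∈ Metric.closedBall (0 : EuclideanSpace ℝ (Fin n)) A,
      |eval (fun i => v i) g| ≤ 1 := by
    intro v hv
    rw [mem_closedBall_zero_iff] at hv
    have hneg := hball (show ‖-v‖ ≤ A by rwa [norm_neg])
    have hcoords : (fun i => (-v) i) = -fun i => v i := by ext i; simp
    rw [Set.mem_ofPred, hcoords] at hneg
    have := hconv.two_mul_apply_zero_le (fun i => v i)
    rw [hg0] at this
    exact abs_le.mpr ⟨by linarith, hball hv⟩
  calc _ ≤ C * 1 := hC g 1 (support_subset_Iic_of_totalDegree_le hdeg) hbound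
    _ ≤ max C 1 := by simp
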